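/- The completely bounded norm of a t-tensor can be computed using a single contraction-valued map: ‖T‖_cb, defined as the supremum over t different contraction-valued maps A_1,…,A_t of ‖∑_{i∈[n]^t} T_i A_1(i_1)⋯A_t(i_t)‖, equals the supremum over a single contraction-valued map A of ‖∑_{i∈[n]^t} T_i A(i_1)⋯A(i_t)‖. -/

import Mathlib

/-!
From contraction-valued maps `A₀, …, A_{t-1}` build the single map
`A(i) = ∑ₛ eₛ eₛ₊₁ᵀ ⊗ Aₛ(i)` on `(ℝ^d)^{t+1}`. It is a weighted shift, hence again a contraction,
and a product of `t` weighted shifts is a shift by `t`, whose only nonzero block is the corner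
`(0, t)`, here `A₀(i₀) ⋯ A_{t-1}(i_{t-1})`. So `∑ᵢ Tᵢ A(i₀) ⋯ A(i_{t-1})` has the norm of
`∑ᵢ Tᵢ A₀(i₀) ⋯ A_{t-1}(i_{t-1})`, while a single map is the special case `A₀ = ⋯ = A_{t-1}`:
the two sets of values coincide.
-/

noncomputable section

/-- `d × d` real matrices, viewed as operators on Euclidean space (with operator norm). -/
abbrev Mat (d : ℕ) := EuclideanSpace ℝ (Fin d) →L[ℝ] EuclideanSpace ℝ (Fin d)

namespace WeightedShift

abbrev Blocks (t : ℕ) (E : Type*) := PiLp 2 fun _ : Fin (t + 1) => E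

variable {𝕜 E : Type*} [NontriviallyNormedField 𝕜] [NormedAddCommGroup E] [NormedSpace 𝕜 E]

/-- Block `(s, s + k)` is `C s`; all other blocks vanish. -/
def shift (t k : ℕ) : (ℕ → E →L[𝕜] E) →ₗ[𝕜] (Blocks t E →L[𝕜] Blocks t E) where
  toFun C := (PiLp.continuousLinearEquiv 2 𝕜 _).symm.toContinuousLinearMap ∘L
    .pi fun s => if h : s + k ≤ t then C s ∘L PiLp.proj 2 _ (⟨s + k, by omega⟩ : Fin (t + 1))
      else 0
  map_add' C D := by ext x s; by_cases h : s + k ≤ t <;> simp [h]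
  map_smul' c C := by ext x s; by_cases h : s + k ≤ t <;> simp [h]

variable {t k : ℕ}

theorem shift_apply (C : ℕ → E →L[𝕜] E) (x : Blocks t E) (s : Fin (t + 1)) :
    shift t k C x s = if h : s + k ≤ t then C s (x ⟨s + k, by omega⟩) else 0 := by
  by_cases h : s + k ≤ t <;> simp [shift, h]

theorem shift_mul_shift (l : ℕ) (C D : ℕ → E →L[𝕜] E) :
    shift t k C * shift t l D = shift t (k + l) fun m => C m * D (m + k) := by
  ext x s
  simp only [mul_apply_eq_comp, shift_apply]
  by_cases hkl : s + (k + l) ≤ t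
  · simp [show (s : ℕ) + k ≤ t by omega, hkl, Nat.add_assoc]
  · by_cases hk : s + k ≤ t <;> simp [hk, hkl, Nat.add_assoc]

theorem shift_zero_one : shift t 0 (fun _ => (1 : E →L[𝕜] E)) = 1 := by
  ext x s
  rw [shift_apply, dif_pos (by omega)]
  rfl

theorem prod_ofFn_shift_one {m : ℕ} (C : Fin m → ℕ → E →L[𝕜] E) :
    (List.ofFn fun s => shift t 1 (C s)).prod =
      shift t m fun j => (List.ofFn fun s => C s (j + s)).prod := by
  induction m with
  | zero => simp [shift_zero_one]
  | succ m ih =>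
    rw [List.ofFn_succ', List.prod_concat, ih, shift_mul_shift]
    simp only [List.ofFn_succ', List.prod_concat, Fin.val_castSucc, Fin.val_last]

theorem norm_shift_one_le {r : ℝ} {C : ℕ → E →L[𝕜] E} (hC : ∀ m, ‖C m‖ ≤ r) :
    ‖shift t 1 C‖ ≤ r := by
  have hr : 0 ≤ r := (norm_nonneg _).trans (hC 0)
  refine ContinuousLinearMap.opNorm_le_bound _ hr fun x => ?_
  refine (sq_le_sq₀ (norm_nonneg _) (by positivity)).mp ?_
  have hsucc (s : Fin t) : ‖shift t 1 C x s.castSucc‖ ^ 2 ≤ r ^ 2 * ‖x s.succ‖ ^ 2 := by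
    rw [shift_apply, dif_pos (by simp), ← mul_pow]
    gcongr
    exact (C s).le_of_opNorm_le (hC s) _
  have hlast : shift t 1 C x (Fin.last t) = 0 := by simp [shift_apply]
  calc ‖shift t 1 C x‖ ^ 2 = ∑ s : Fin t, ‖shift t 1 C x s.castSucc‖ ^ 2 := by
        simp [PiLp.norm_sq_eq_of_L2, Fin.sum_univ_castSucc, hlast]
    _ ≤ r ^ 2 * ∑ s : Fin t, ‖x s.succ‖ ^ 2 := by
        rw [Finset.mul_sum]; exact Finset.sum_le_sum fun s _ => hsucc s
    _ ≤ r ^ 2 * ‖x‖ ^ 2 := by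
        gcongr
        rw [PiLp.norm_sq_eq_of_L2, Fin.sum_univ_succ]
        exact le_add_of_nonneg_left (by positivity)
    _ = (r * ‖x‖) ^ 2 := (mul_pow ..).symm

theorem shift_self_apply (C : ℕ → E →L[𝕜] E) (x : Blocks t E) :
    shift t t C x = PiLp.single 2 0 (C 0 (x (Fin.last t))) := by
  ext s
  rcases eq_or_ne s 0 with rfl | hs
  · simp [shift_apply, Fin.last]
  · have : ¬(s : ℕ) + t ≤ t := by
      have := Fin.val_ne_zero_iff.mpr hs
      omega
    simp [shift_apply, this, hs]

theorem norm_shift_self (C : ℕ → E →L[𝕜] E) : ‖shift t t C‖ = ‖C 0‖ := by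
  refine le_antisymm (ContinuousLinearMap.opNorm_le_bound _ (norm_nonneg _) fun x => ?_)
    (ContinuousLinearMap.opNorm_le_bound _ (norm_nonneg _) fun v => ?_)
  · rw [shift_self_apply, PiLp.norm_single]
    exact (C 0).le_opNorm_of_le (PiLp.norm_apply_le x _)
  · calc ‖C 0 v‖ = ‖shift t t C (PiLp.single 2 (Fin.last t) v)‖ := by
          simp [shift_self_apply]
      _ ≤ ‖shift t t C‖ * ‖v‖ := by
          simpa using (shift t t C).le_opNorm (PiLp.single 2 (Fin.last t) v)

variable {n : ℕ}

/-- The paper's `A(i) = ∑ₛ eₛ eₛ₊₁ᵀ ⊗ Aₛ(i)`. -/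
def blockShift (A : Fin t → Fin n → E →L[𝕜] E) (i : Fin n) : Blocks t E →L[𝕜] Blocks t E :=
  shift t 1 fun m => if h : m < t then A ⟨m, h⟩ i else 0

theorem norm_blockShift_le {r : ℝ} (hr : 0 ≤ r) {A : Fin t → Fin n → E →L[𝕜] E}
    (hA : ∀ s i, ‖A s i‖ ≤ r) (i : Fin n) : ‖blockShift A i‖ ≤ r := by
  refine norm_shift_one_le fun m => ?_
  split_ifs
  · exact hA _ _
  · simpa using hr

theorem norm_sum_smul_prod_blockShift (T : (Fin t → Fin n) → 𝕜)
    (A : Fin t → Fin n → E →L[𝕜] E) :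
    ‖∑ i, T i • (List.ofFn fun s => blockShift A (i s)).prod‖ =
      ‖∑ i, T i • (List.ofFn fun s => A s (i s)).prod‖ := by
  -- A product of `t` shifts by one is a shift by `t`: only its corner block `(0, t)` survives.
  simp only [blockShift, prod_ofFn_shift_one, ← map_smul, ← map_sum, norm_shift_self,
    Finset.sum_apply, Pi.smul_apply, zero_add, Fin.is_lt, dif_pos]

end WeightedShift

namespace LinearIsometryEquiv

variable {𝕜 H K : Type*} [RCLike 𝕜] [NormedAddCommGroup H] [InnerProductSpace 𝕜 H]
  [CompleteSpace H] [NormedAddCommGroup K] [InnerProductSpace 𝕜 K] [CompleteSpace K]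

theorem norm_conjStarAlgEquiv_le (e : H ≃ₗᵢ[𝕜] K) (B : H →L[𝕜] H) :
    ‖e.conjStarAlgEquiv B‖ ≤ ‖B‖ :=
  ContinuousLinearMap.opNorm_le_bound _ (norm_nonneg B) fun y => by
    simpa using B.le_opNorm (e.symm y)

theorem norm_conjStarAlgEquiv (e : H ≃ₗᵢ[𝕜] K) (B : H →L[𝕜] H) :
    ‖e.conjStarAlgEquiv B‖ = ‖B‖ :=
  (e.norm_conjStarAlgEquiv_le B).antisymm <| by
    have := e.symm.norm_conjStarAlgEquiv_le (e.conjStarAlgEquiv B)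
    rwa [← symm_conjStarAlgEquiv, StarAlgEquiv.symm_apply_apply] at this

end LinearIsometryEquiv

theorem cb_norm_single_map (n t : ℕ) (T : (Fin t → Fin n) → ℝ) :
    sSup {c : ℝ | ∃ (d : ℕ) (A : Fin t → Fin n → Mat d),
      (∀ s j, ‖A s j‖ ≤ 1) ∧
      c = ‖∑ i : Fin t → Fin n, T i • (List.ofFn fun s => A s (i s)).prod‖} =
    sSup {c : ℝ | ∃ (d : ℕ) (A : Fin n → Mat d),
      (∀ j, ‖A j‖ ≤ 1) ∧
      c = ‖∑ i : Fin t → Fin n, T i • (List.ofFn fun s => A (i s)).prod‖} := by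
  congr 1
  ext c
  constructor
  · rintro ⟨d, A, hA, rfl⟩
    let e := (stdOrthonormalBasis ℝ (WeightedShift.Blocks t (EuclideanSpace ℝ (Fin d)))).repr
    refine ⟨_, fun j => e.conjStarAlgEquiv (WeightedShift.blockShift A j), fun j => ?_, ?_⟩
    · rw [e.norm_conjStarAlgEquiv]
      exact WeightedShift.norm_blockShift_le zero_le_one hA j
    · rw [← WeightedShift.norm_sum_smul_prod_blockShift, ← e.norm_conjStarAlgEquiv]
      simp only [map_sum, map_smul, map_list_prod, List.map_ofFn, Function.comp_def]
  · rintro ⟨d, A, hA, rfl⟩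
    exact ⟨d, fun _ => A, fun _ => hA, rfl⟩
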